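/- arXiv:2508.16954 — 5 statements merged into one kernel-verified Lean document; each statement's English description precedes it below -/
import Mathlib

section
/- Let K be a field of characteristic 0, L a Lie algebra over K, and H a Lie subalgebra of L. Let τ : L → L be a Lie algebra automorphism satisfying τ(h) = -h for every h ∈ H and τ ∘ τ = id. Then for every K-linear functional α : H → K, τ maps the weight space L_α onto the weight space L_{-α}; that is, τ(L_α) = L_{-α}. -/
/-- An involution of a Lie algebra acting as `-id` on a Lie subalgebra `H`
maps each weight space `L_α` onto the weight space `L_{-α}`. -/
theorem stmt0 {K L : Type*} [Field K] [CharZero K] [LieRing L] [LieAlgebra K L]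
    (H : LieSubalgebra K L) (τ : L ≃ₗ⁅K⁆ L)
    (hneg : ∀ h ∈ H, τ h = -h) (hinv : ∀ x, τ (τ x) = x)
    (α : H →ₗ[K] K) :
    ⇑τ '' {x : L | ∀ h : H, ⁅(h : L), x⁆ = α h • x}
      = {x : L | ∀ h : H, ⁅(h : L), x⁆ = (-α) h • x} := by
  have hN : ∀ a : L, τ (-a) = -τ a := fun a => by
    simpa using τ.toLinearEquiv.map_neg a
  have hS : ∀ (c : K) (a : L), τ (c • a) = c • τ a := fun c a => by
    exact τ.toLinearEquiv.map_smul c a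
  have key : ∀ (β : H →ₗ[K] K) (x : L), (∀ h : H, ⁅(h : L), x⁆ = β h • x) →
      ∀ h : H, ⁅(h : L), τ x⁆ = (-β) h • τ x := by
    intro β x hx h
    have h1 : τ (-(h : L)) = (h : L) := by
      rw [hN, hneg _ h.2, neg_neg]
    calc ⁅(h : L), τ x⁆ = τ ⁅-(h : L), x⁆ := by rw [τ.map_lie, h1]
      _ = (-β) h • τ x := by
          rw [neg_lie, hx h, hN, hS]
          simp
  ext y
  constructor
  · rintro ⟨x, hx, rfl⟩
    exact key α x hx
  · intro hy
    refine ⟨τ y, fun h => ?_, hinv y⟩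
    have := key (-α) y hy h
    simpa using this
end

section
/- Let K be a field of characteristic 0 and L a Lie algebra over K. Let e, h, f ∈ L be an sl2-triple (⁅h,e⁆ = 2e, ⁅h,f⁆ = -2f, ⁅e,f⁆ = h) such that ad(e) and ad(f) are nilpotent endomorphisms of L. Let τ : L → L be a Lie algebra automorphism with τ(e) = -f and τ(f) = -e. Then τ commutes with θ := exp(ad e) ∘ exp(ad(-f)) ∘ exp(ad e), i.e., τ ∘ θ = θ ∘ τ. -/
/-!
Conjugation by `τ` sends `exp (ad e)` to `exp (ad (τ e)) = exp (ad (-f))` and `exp (ad (-f))`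
to `exp (ad e)`, so `τ θ τ⁻¹ = exp (ad (-f)) exp (ad e) exp (ad (-f))`, and this is `θ` by the
braid relation `exp x exp (-z) exp x = exp (-z) exp x exp (-z)` for an `sl₂`-triple `(x, h, z)`
of nilpotent elements of a `ℚ`-algebra. The braid relation holds because `exp (-x) exp (-z) exp x`
and `exp (-z) exp x exp z` are both `exp (x + h - z)`: conjugation by `exp a` is `exp (ad a)`,
and on `-z` (resp. `x`) the series `exp (ad (-x))` (resp. `exp (ad (-z))`) stops after its
quadratic term.
-/

open Finset in
/-- The exponential of a nilpotent endomorphism, computed as the (finite) sum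
`Σ_{k < m} N^k / k!`; when `N ^ m = 0` this is the full exponential series. -/
noncomputable def expNil {K V : Type*} [Field K] [AddCommGroup V] [Module K V]
    (m : ℕ) (N : Module.End K V) : Module.End K V :=
  ∑ k ∈ range m, ((k.factorial : K)⁻¹) • N ^ k

open IsNilpotent LieAlgebra

section Braid

attribute [local instance] LieRing.ofAssociativeRing

theorem Module.End.exp_apply_of_apply_apply_apply_eq_zero {M : Type*} [AddCommGroup M]
    [Module ℚ M] {D : Module.End ℚ M} (hD : IsNilpotent D) {b : M} (hb : D (D (D b)) = 0) :
    exp D b = b + D b + (2 : ℚ)⁻¹ • D (D b) := by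
  have hb3 : (D ^ 3) b = 0 := by rwa [pow_three]
  simpa [Finset.sum_range_succ, sq] using exp_smul_eq_sum (a := D) (m := b) hb3 hD

namespace IsNilpotent

variable {A : Type*} [Ring A]

theorem units_conj_exp [Module ℚ A] (u : Aˣ) {a : A} (ha : IsNilpotent a) :
    u * exp a * ↑u⁻¹ = exp (u * a * ↑u⁻¹) := by
  simpa [ConjAct.units_smul_def] using (exp_smul (ConjAct.toConjAct u) ha).symm

variable [Algebra ℚ A]

theorem exp_mulLeft {a : A} (ha : IsNilpotent a) :
    exp (LinearMap.mulLeft ℚ a) = LinearMap.mulLeft ℚ (exp a) :=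
  (map_exp ha (Algebra.lmul ℚ A)).symm

theorem exp_mulRight {a : A} (ha : IsNilpotent a) :
    exp (LinearMap.mulRight ℚ a) = LinearMap.mulRight ℚ (exp a) := by
  obtain ⟨k, hk⟩ := ha
  have hk' : (LinearMap.mulRight ℚ a) ^ k = 0 := by
    rw [LinearMap.pow_mulRight, hk]
    ext
    simp
  ext b
  simp [exp_eq_sum hk, exp_eq_sum hk', LinearMap.sum_apply, LinearMap.pow_mulRight,
    Finset.mul_sum]

theorem exp_mul_mul_exp_neg {a : A} (ha : IsNilpotent a) (b : A) :
    exp a * b * exp (-a) = exp (ad ℚ A a) b := by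
  have hL : IsNilpotent (LinearMap.mulLeft ℚ a) := ha.map (Algebra.lmul ℚ A)
  have hR : IsNilpotent (LinearMap.mulRight ℚ (-a)) := by
    obtain ⟨k, hk⟩ := ha.neg
    exact ⟨k, by rw [LinearMap.pow_mulRight, hk]; ext; simp⟩
  have had : ad ℚ A a = LinearMap.mulLeft ℚ a + LinearMap.mulRight ℚ (-a) := by
    rw [ad_eq_lmul_left_sub_lmul_right]
    ext
    simp [sub_eq_add_neg]
  rw [had, exp_add_of_commute (LinearMap.commute_mulLeft_right a (-a)) hL hR, exp_mulLeft ha,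
    exp_mulRight ha.neg, Module.End.mul_apply, LinearMap.mulRight_apply,
    LinearMap.mulLeft_apply, mul_assoc]

theorem exp_braid {e h f : A} (he : IsNilpotent e) (hf : IsNilpotent f) (hef : ⁅e, f⁆ = h)
    (hhe : ⁅h, e⁆ = 2 • e) (hhf : ⁅h, f⁆ = -(2 • f)) :
    exp e * exp (-f) * exp e = exp (-f) * exp e * exp (-f) := by
  have half_two (x : A) : (2 : ℚ)⁻¹ • (2 • x) = x := by
    rw [← ofNat_smul_eq_nsmul ℚ, inv_smul_smul₀ two_ne_zero]
  have hconj_e : exp (-e) * (-f) * exp e = e + h - f := by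
    have h1 : ad ℚ A (-e) (-f) = h := by rw [ad_apply, neg_lie, lie_neg, neg_neg, hef]
    have h2 : ad ℚ A (-e) h = 2 • e := by rw [ad_apply, neg_lie, lie_skew, hhe]
    have h3 : ad ℚ A (-e) (2 • e) = 0 := by
      rw [ad_apply, lie_nsmul, neg_lie, lie_self, neg_zero, smul_zero]
    calc exp (-e) * (-f) * exp e = exp (ad ℚ A (-e)) (-f) := by
          rw [← exp_mul_mul_exp_neg he.neg, neg_neg]
      _ = -f + h + (2 : ℚ)⁻¹ • (2 • e) := by
          rw [Module.End.exp_apply_of_apply_apply_apply_eq_zero (ad_nilpotent_of_nilpotent he.neg)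
            (by rw [h1, h2, h3]), h1, h2]
      _ = e + h - f := by rw [half_two]; abel
  have hconj_f : exp (-f) * e * exp f = e + h - f := by
    have h1 : ad ℚ A (-f) e = h := by rw [ad_apply, neg_lie, lie_skew, hef]
    have h2 : ad ℚ A (-f) h = -(2 • f) := by rw [ad_apply, neg_lie, lie_skew, hhf]
    have h3 : ad ℚ A (-f) (-(2 • f)) = 0 := by
      rw [ad_apply, lie_neg, lie_nsmul, neg_lie, lie_self, neg_zero, smul_zero, neg_zero]
    calc exp (-f) * e * exp f = exp (ad ℚ A (-f)) e := by
          rw [← exp_mul_mul_exp_neg hf.neg, neg_neg]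
      _ = e + h - (2 : ℚ)⁻¹ • (2 • f) := by
          rw [Module.End.exp_apply_of_apply_apply_apply_eq_zero (ad_nilpotent_of_nilpotent hf.neg)
            (by rw [h1, h2, h3]), h1, h2, smul_neg, sub_eq_add_neg]
      _ = e + h - f := by rw [half_two]
  let E : Aˣ := ⟨exp e, exp (-e), exp_mul_exp_neg_self he, exp_neg_mul_exp_self he⟩
  let F : Aˣ := ⟨exp (-f), exp f, exp_neg_mul_exp_self hf, exp_mul_exp_neg_self hf⟩
  have hEF : E⁻¹ * F * E = F * E * F⁻¹ := Units.ext <|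
    calc exp (-e) * exp (-f) * exp e = exp (exp (-e) * (-f) * exp e) := units_conj_exp E⁻¹ hf.neg
      _ = exp (exp (-f) * e * exp f) := by rw [hconj_e, hconj_f]
      _ = exp (-f) * exp e * exp f := (units_conj_exp F he).symm
  have hbraid : E * F * E = F * E * F :=
    calc E * F * E = E * (F * E * F⁻¹) * F := by group
      _ = F * E * F := by rw [← hEF]; group
  exact congrArg Units.val hbraid

end IsNilpotent

theorem LieAlgebra.exp_ad_braid {K L : Type*} [Field K] [LieRing L] [LieAlgebra K L]
    [Algebra ℚ (Module.End K L)] {e h f : L}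
    (he : IsNilpotent (ad K L e)) (hf : IsNilpotent (ad K L f)) (hef : ⁅e, f⁆ = h)
    (hhe : ⁅h, e⁆ = 2 • e) (hhf : ⁅h, f⁆ = -(2 • f)) :
    exp (ad K L e) * exp (ad K L (-f)) * exp (ad K L e)
      = exp (ad K L (-f)) * exp (ad K L e) * exp (ad K L (-f)) := by
  rw [map_neg]
  refine he.exp_braid hf (h := ad K L h) ?_ ?_ ?_
  · rw [← LieHom.map_lie, hef]
  · rw [← LieHom.map_lie, hhe, map_nsmul]
  · rw [← LieHom.map_lie, hhf, map_neg, map_nsmul]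

end Braid

theorem expNil_eq_exp {K V : Type*} [Field K] [CharZero K] [AddCommGroup V] [Module K V]
    [Module ℚ (Module.End K V)] [IsScalarTower ℚ K (Module.End K V)] {m : ℕ}
    {N : Module.End K V} (hN : N ^ m = 0) :
    expNil m N = exp N := by
  rw [exp_eq_sum hN, expNil]
  refine Finset.sum_congr rfl fun k _ => ?_
  rw [← algebraMap_smul K ((k.factorial : ℚ)⁻¹), map_inv₀, map_natCast]

theorem LieEquiv.conjRingEquiv_exp_ad {K L : Type*} [Field K] [LieRing L] [LieAlgebra K L]
    [Module ℚ (Module.End K L)] (τ : L ≃ₗ⁅K⁆ L) {x : L} (hx : IsNilpotent (ad K L x)) :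
    τ.toLinearEquiv.conjRingEquiv (exp (ad K L x)) = exp (ad K L (τ x)) := by
  rw [map_exp hx, ← conj_ad_apply]
  rfl

/-- A Lie algebra automorphism `τ` with `τ e = -f` and `τ f = -e` commutes with
`θ = exp(ad e) ∘ exp(ad (-f)) ∘ exp(ad e)` for an `sl2`-triple `(e, h, f)` with
`ad e` and `ad f` nilpotent. -/
theorem stmt4 {K L : Type*} [Field K] [CharZero K] [LieRing L] [LieAlgebra K L]
    (e h f : L)
    (h1 : ⁅h, e⁆ = (2 : K) • e) (h2 : ⁅h, f⁆ = (-2 : K) • f) (h3 : ⁅e, f⁆ = h)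
    (m : ℕ) (hme : (LieAlgebra.ad K L e) ^ m = 0) (hmf : (LieAlgebra.ad K L f) ^ m = 0)
    (τ : L ≃ₗ⁅K⁆ L) (hτe : τ e = -f) (hτf : τ f = -e) :
    ∀ x : L,
      τ ((expNil m (LieAlgebra.ad K L e) ∘ₗ expNil m (LieAlgebra.ad K L (-f))
          ∘ₗ expNil m (LieAlgebra.ad K L e)) x)
        = (expNil m (LieAlgebra.ad K L e) ∘ₗ expNil m (LieAlgebra.ad K L (-f))
          ∘ₗ expNil m (LieAlgebra.ad K L e)) (τ x) := by
  -- Mathlib's exponential of nilpotent elements takes `ℚ`-scalars; they act on `End K L`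
  -- through `K`.
  let _ : Algebra ℚ (Module.End K L) := .compHom _ (algebraMap ℚ K)
  have _ : IsScalarTower ℚ K (Module.End K L) := .of_algebraMap_eq' rfl
  have hmf' : ad K L (-f) ^ m = 0 := by rw [map_neg, neg_pow, hmf, mul_zero]
  have hθ : expNil m (ad K L e) ∘ₗ expNil m (ad K L (-f)) ∘ₗ expNil m (ad K L e)
      = exp (ad K L e) * exp (ad K L (-f)) * exp (ad K L e) := by
    rw [expNil_eq_exp hme, expNil_eq_exp hmf', mul_assoc]
    rfl
  set θ := expNil m (ad K L e) ∘ₗ expNil m (ad K L (-f)) ∘ₗ expNil m (ad K L e)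
  have hτθ : τ.toLinearEquiv.conjRingEquiv θ = θ := by
    rw [hθ, map_mul, map_mul, τ.conjRingEquiv_exp_ad ⟨m, hme⟩,
      τ.conjRingEquiv_exp_ad ⟨m, hmf'⟩, hτe, map_neg τ, hτf, neg_neg]
    refine (exp_ad_braid ⟨m, hme⟩ ⟨m, hmf⟩ h3 ?_ ?_).symm
    · rw [h1, ofNat_smul_eq_nsmul]
    · rw [h2, neg_smul, ofNat_smul_eq_nsmul]
  intro x
  calc τ (θ x) = τ.toLinearEquiv.conjRingEquiv θ (τ.toLinearEquiv x) := by
        rw [LinearEquiv.conjRingEquiv_apply_apply, LinearEquiv.symm_apply_apply]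
        rfl
    _ = θ (τ x) := by rw [hτθ]; rfl
end

section
/- Let K be a field and A a nontrivial unital associative K-algebra. Let u, v be units of A and q ∈ K with u·v = q • (v·u). Suppose σ : A → A is a K-linear map satisfying σ(a·b) = σ(b)·σ(a) for all a, b ∈ A, and suppose there exist nonzero scalars k, l ∈ K with σ(u) = k • u⁻¹ and σ(v) = l • v⁻¹. Then q² = 1 (in particular q = 1 or q = -1). -/
/-- If `u, v` are units of a nontrivial associative `K`-algebra with `u·v = q • (v·u)`,
and a `K`-linear anti-homomorphism `σ` sends `u` to a nonzero multiple of `u⁻¹` and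
`v` to a nonzero multiple of `v⁻¹`, then `q² = 1`. -/
theorem stmt7 {K A : Type*} [Field K] [Ring A] [Algebra K A] [Nontrivial A]
    (u v : Aˣ) (q : K) (hcom : (u : A) * (v : A) = q • ((v : A) * (u : A)))
    (σ : A →ₗ[K] A) (hanti : ∀ a b : A, σ (a * b) = σ b * σ a)
    (k l : K) (hk : k ≠ 0) (hl : l ≠ 0)
    (hσu : σ (u : A) = k • ((u⁻¹ : Aˣ) : A)) (hσv : σ (v : A) = l • ((v⁻¹ : Aˣ) : A)) :
    q ^ 2 = 1 := by
  have h1 : σ ((u : A) * v) = (l * k) • (((v⁻¹ : Aˣ) : A) * ((u⁻¹ : Aˣ) : A)) := by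
    rw [hanti, hσu, hσv, smul_mul_smul_comm]
  have h2 : σ ((u : A) * v) = (q * (k * l)) • (((u⁻¹ : Aˣ) : A) * ((v⁻¹ : Aˣ) : A)) := by
    rw [hcom, map_smul, hanti, hσu, hσv, smul_mul_smul_comm, smul_smul]
  have key := h1.symm.trans h2
  -- v * u⁻¹ = q • (u⁻¹ * v)
  have h3 : (v : A) * ((u⁻¹ : Aˣ) : A) = q • (((u⁻¹ : Aˣ) : A) * v) := by
    have h := congrArg (fun x => ((u⁻¹ : Aˣ) : A) * x * ((u⁻¹ : Aˣ) : A)) hcom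
    simpa [mul_assoc, ← mul_assoc, Units.inv_mul, Units.mul_inv, mul_smul_comm,
      smul_mul_assoc] using h
  have key2 := congrArg (fun x => (v : A) * x * (u : A)) key
  simp only [mul_smul_comm, smul_mul_assoc] at key2
  have lhs : (v : A) * (((v⁻¹ : Aˣ) : A) * ((u⁻¹ : Aˣ) : A)) * (u : A) = 1 := by
    rw [← mul_assoc, Units.mul_inv, one_mul, Units.inv_mul]
  have rhs : (v : A) * (((u⁻¹ : Aˣ) : A) * ((v⁻¹ : Aˣ) : A)) * (u : A) = q • 1 := by
    rw [← mul_assoc, h3]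
    simp [smul_mul_assoc, mul_assoc, Units.inv_mul_cancel_left, Units.mul_inv_cancel_left]
  rw [lhs, rhs, smul_smul] at key2
  have keq : (l * k) = (q * (k * l) * q) := by
    have : algebraMap K A (l * k) = algebraMap K A (q * (k * l) * q) := by
      simpa [Algebra.algebraMap_eq_smul_one] using key2
    exact (algebraMap K A).injective this
  have hkl : k * l ≠ 0 := mul_ne_zero hk hl
  have h4 : (k * l) * q ^ 2 = (k * l) * 1 := by linear_combination -keq
  exact mul_left_cancel₀ hkl h4
end

section
/- Let K be a field, n a natural number, and A a unital associative K-algebra equipped with a grading 𝒜 : ℤⁿ → Submodule K A making A a ℤⁿ-graded algebra (1 ∈ 𝒜(0), 𝒜(λ)·𝒜(μ) ⊆ 𝒜(λ+μ), and A is the internal direct sum of the 𝒜(λ)). Assume dim_K 𝒜(λ) ≤ 1 for all λ and every nonzero homogeneous element of A is a unit. Suppose there is a K-linear bijection σ : A → A with σ(ab) = σ(b)σ(a) for all a, b, σ ∘ σ = id, and σ(𝒜(λ)) = 𝒜(-λ) for all λ ∈ ℤⁿ. Then for all nonzero homogeneous elements u ∈ 𝒜(λ), v ∈ 𝒜(μ)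 and every q ∈ K with u·v = q • (v·u), one has q² = 1. -/
/-- In a module whose rank is at most one, every element is a scalar multiple of any
nonzero element of a given submodule. -/
lemma exists_smul_eq_of_rank_le_one {K A : Type*} [Field K] [AddCommGroup A] [Module K A]
    (P : Submodule K A) (h : Module.rank K P ≤ 1) {e x : A} (he : e ∈ P) (hx : x ∈ P)
    (he0 : e ≠ 0) : ∃ c : K, x = c • e := by
  obtain ⟨v₀, hv₀⟩ := rank_le_one_iff.mp h
  obtain ⟨a, ha⟩ := hv₀ ⟨e, he⟩
  obtain ⟨b, hb⟩ := hv₀ ⟨x, hx⟩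
  have ha0 : a ≠ 0 := by
    rintro rfl
    apply he0
    have := congrArg Subtype.val ha.symm
    simpa using this
  refine ⟨b / a, ?_⟩
  have key : (⟨x, hx⟩ : P) = (b / a) • (⟨e, he⟩ : P) := by
    rw [← ha, ← hb, smul_smul]
    congr 1
    field_simp
  have := congrArg Subtype.val key
  simpa using this

/-- If an associative `ℤⁿ`-graded `K`-algebra with one-dimensional homogeneous components
consisting of units admits a pre-Chevalley anti-involution, then any nonzero homogeneous
elements `u, v` with `u·v = q • (v·u)` satisfy `q² = 1`. -/
theorem stmt8 {K A : Type*} [Field K] [Ring A] [Algebra K A]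
    (n : ℕ) (𝒜 : (Fin n → ℤ) → Submodule K A)
    (hone : (1 : A) ∈ 𝒜 0)
    (hmul : ∀ lam mu : Fin n → ℤ, ∀ a ∈ 𝒜 lam, ∀ b ∈ 𝒜 mu, a * b ∈ 𝒜 (lam + mu))
    (hdirect : DirectSum.IsInternal 𝒜)
    (hdim : ∀ lam : Fin n → ℤ, Module.rank K (𝒜 lam) ≤ 1)
    (hunit : ∀ (lam : Fin n → ℤ) (a : A), a ∈ 𝒜 lam → a ≠ 0 → IsUnit a)
    (σ : A →ₗ[K] A)
    (hanti : ∀ a b : A, σ (a * b) = σ b * σ a)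
    (hinv : ∀ a : A, σ (σ a) = a)
    (hgr : ∀ lam : Fin n → ℤ, Submodule.map σ (𝒜 lam) = 𝒜 (-lam)) :
    ∀ (lam mu : Fin n → ℤ) (u v : A) (q : K),
      u ∈ 𝒜 lam → u ≠ 0 → v ∈ 𝒜 mu → v ≠ 0 → u * v = q • (v * u) → q ^ 2 = 1 := by
  intro lam mu u v q hu hu0 hv hv0 heq
  haveI : Nontrivial A := ⟨⟨u, 0, hu0⟩⟩
  -- σ u, σ v are nonzero homogeneous of degrees -lam, -mu
  have hσu : σ u ∈ 𝒜 (-lam) := by rw [← hgr]; exact ⟨u, hu, rfl⟩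
  have hσv : σ v ∈ 𝒜 (-mu) := by rw [← hgr]; exact ⟨v, hv, rfl⟩
  have hσu0 : σ u ≠ 0 := by
    intro h
    apply hu0
    have := hinv u
    rw [h, map_zero] at this
    exact this.symm
  have hσv0 : σ v ≠ 0 := by
    intro h
    apply hv0
    have := hinv v
    rw [h, map_zero] at this
    exact this.symm
  -- units and their inverses
  obtain ⟨U, hUe⟩ := hunit lam u hu hu0
  obtain ⟨V, hVe⟩ := hunit mu v hv hv0
  set ui : A := ((U⁻¹ : Aˣ) : A) with hui_def
  set vi : A := ((V⁻¹ : Aˣ) : A) with hvi_def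
  have huiu : ui * u = 1 := by rw [← hUe]; exact U.inv_mul
  have huui : u * ui = 1 := by rw [← hUe]; exact U.mul_inv
  have hviv : vi * v = 1 := by rw [← hVe]; exact V.inv_mul
  have hvvi : v * vi = 1 := by rw [← hVe]; exact V.mul_inv
  -- u * σ u is a scalar multiple of 1
  have hmem_u : u * σ u ∈ 𝒜 0 := by
    have := hmul lam (-lam) u hu (σ u) hσu
    simpa using this
  have hmem_v : v * σ v ∈ 𝒜 0 := by
    have := hmul mu (-mu) v hv (σ v) hσv
    simpa using this
  obtain ⟨s, hs⟩ := exists_smul_eq_of_rank_le_one (𝒜 0) (hdim 0) hone hmem_u one_ne_zero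
  obtain ⟨t, ht⟩ := exists_smul_eq_of_rank_le_one (𝒜 0) (hdim 0) hone hmem_v one_ne_zero
  have hs0 : s ≠ 0 := by
    rintro rfl
    have : u * σ u = 0 := by rw [hs, zero_smul]
    exact ((hunit lam u hu hu0).mul (hunit (-lam) (σ u) hσu hσu0)).ne_zero this
  have ht0 : t ≠ 0 := by
    rintro rfl
    have : v * σ v = 0 := by rw [ht, zero_smul]
    exact ((hunit mu v hv hv0).mul (hunit (-mu) (σ v) hσv hσv0)).ne_zero this
  -- σ u = s • u⁻¹, σ v = t • v⁻¹
  have hσu_eq : σ u = s • ui := by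
    calc σ u = ui * (u * σ u) := by rw [← mul_assoc, huiu, one_mul]
    _ = ui * (s • 1) := by rw [hs]
    _ = s • ui := by rw [mul_smul_comm, mul_one]
  have hσv_eq : σ v = t • vi := by
    calc σ v = vi * (v * σ v) := by rw [← mul_assoc, hviv, one_mul]
    _ = vi * (t • 1) := by rw [ht]
    _ = t • vi := by rw [mul_smul_comm, mul_one]
  -- apply σ to the commutation relation
  have h2 : σ v * σ u = q • (σ u * σ v) := by
    have := congrArg σ heq
    rw [hanti, map_smul, hanti] at this
    exact this
  rw [hσu_eq, hσv_eq] at h2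
  have h2' : (t * s) • (vi * ui) = (t * s) • (q • (ui * vi)) := by
    have l : (t • vi) * (s • ui) = (t * s) • (vi * ui) := by
      rw [smul_mul_assoc, mul_smul_comm, smul_smul]
    have r : q • ((s • ui) * (t • vi)) = (t * s) • (q • (ui * vi)) := by
      rw [smul_mul_assoc, mul_smul_comm, smul_smul, smul_smul, smul_smul]
      ring_nf
    rw [← l, ← r]; exact h2
  have h3 : vi * ui = q • (ui * vi) := by
    have hts : (t * s) ≠ 0 := mul_ne_zero ht0 hs0
    calc vi * ui = (t * s)⁻¹ • ((t * s) • (vi * ui)) := (inv_smul_smul₀ hts _).symm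
    _ = (t * s)⁻¹ • ((t * s) • (q • (ui * vi))) := by rw [h2']
    _ = q • (ui * vi) := inv_smul_smul₀ hts _
  -- compute (vi * ui) * (u * v) in two ways
  have e1 : (vi * ui) * (u * v) = 1 := by
    rw [mul_assoc, ← mul_assoc ui u v, huiu, one_mul, hviv]
  have inner : (ui * vi) * (v * u) = 1 := by
    rw [mul_assoc, ← mul_assoc vi v u, hviv, one_mul, huiu]
  have e2 : (vi * ui) * (u * v) = (q * q) • 1 := by
    rw [heq, h3, smul_mul_assoc, mul_smul_comm, smul_smul, inner]
  have h4 : algebraMap K A (q * q) = algebraMap K A 1 := by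
    rw [Algebra.algebraMap_eq_smul_one, Algebra.algebraMap_eq_smul_one, one_smul]
    rw [← e2, e1]
  have h5 : q * q = 1 := (algebraMap K A).injective h4
  rw [pow_two]; exact h5
end

section
/- Let K be a field of characteristic 0, L a Lie algebra over K, Λ an additive abelian group, and N : Λ → Submodule K L a family of subspaces with ⁅N(λ), N(μ)⁆ ⊆ N(λ+μ) for all λ, μ. Let H ⊆ g be Lie subalgebras of L with H abelian and g ⊆ N(0). For a K-linear functional α on H write L_α = {x ∈ L | ⁅h,x⁆ = α(h) • x for all h ∈ H}. Let τ : L → L be a Lie algebra automorphism with τ ∘ τ = id, τ(N(λ)) = N(-λ) for all λ ∈ Λ, and τ(x) = -x for all x ∈ N(0) ∩ L_0. Assume: (i) dim_K (N(0) ∩ L_α) ≤ 1 for every nonzero α; (ii) for every nonzero α, if g ∩ L_α ≠ 0 then g ∩ L_{-α} ≠ 0; (iii) g is spanned as a K-vector space by H together with the subspaces g ∩ L_α for nonzero α. Then τ(g) ⊆ g. -/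
/-- The weight space `L_α = {x ∈ L | ⁅h, x⁆ = α(h) • x for all h ∈ H}` of a Lie algebra `L`
relative to a Lie subalgebra `H` and a linear functional `α` on `H`. -/
def wtSpace {K L : Type*} [Field K] [LieRing L] [LieAlgebra K L]
    (H : LieSubalgebra K L) (α : H →ₗ[K] K) : Submodule K L where
  carrier := {x : L | ∀ h : H, ⁅(h : L), x⁆ = α h • x}
  add_mem' := by
    intro a b ha hb h
    rw [lie_add, ha h, hb h, smul_add]
  zero_mem' := by
    intro h
    rw [lie_zero, smul_zero]
  smul_mem' := by
    intro c a ha h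
    rw [lie_smul, ha h, smul_comm]

/-- An involution `τ` of a `Λ`-graded Lie algebra acting as `-id` on `N 0 ∩ L_0` and
sending `N λ` to `N (-λ)` preserves the grading subalgebra `g`, under the structural
hypotheses satisfied by a Lie torus. -/
theorem stmt11 {K L Λ : Type*} [Field K] [CharZero K] [LieRing L] [LieAlgebra K L]
    [AddCommGroup Λ] (N : Λ → Submodule K L)
    (hN : ∀ lam mu : Λ, ∀ x ∈ N lam, ∀ y ∈ N mu, ⁅x, y⁆ ∈ N (lam + mu))
    (H g : LieSubalgebra K L) (hHg : H ≤ g) (hab : IsLieAbelian H)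
    (hg0 : (g : Set L) ⊆ (N 0 : Set L))
    (τ : L ≃ₗ⁅K⁆ L) (hinv : ∀ x : L, τ (τ x) = x)
    (hτN : ∀ lam : Λ, ⇑τ '' (N lam : Set L) = (N (-lam) : Set L))
    (hτ0 : ∀ x ∈ N 0 ⊓ wtSpace H (0 : H →ₗ[K] K), τ x = -x)
    (hdim : ∀ α : H →ₗ[K] K, α ≠ 0 → Module.rank K ↥(N 0 ⊓ wtSpace H α) ≤ 1)
    (hpair : ∀ α : H →ₗ[K] K, α ≠ 0 →
      (∃ x : L, x ∈ g ∧ x ∈ wtSpace H α ∧ x ≠ 0) →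
      (∃ x : L, x ∈ g ∧ x ∈ wtSpace H (-α) ∧ x ≠ 0))
    (hspan : g.toSubmodule
      = H.toSubmodule ⊔ ⨆ (α : H →ₗ[K] K) (_ : α ≠ 0), (g.toSubmodule ⊓ wtSpace H α)) :
    ∀ x ∈ g, τ x ∈ g := by

  have hH0 : ∀ h : H, (h : L) ∈ N 0 ⊓ wtSpace H (0 : H →ₗ[K] K) := by
    intro h
    refine ⟨hg0 (hHg h.2), ?_⟩
    intro h'
    have h1 : ⁅h', h⁆ = (0 : H) := trivial_lie_zero _ _ h' h
    have h2 : ⁅(h' : L), (h : L)⁆ = 0 := by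
      rw [show ⁅(h' : L), (h : L)⁆ = ((⁅h', h⁆ : H) : L) from rfl, h1, ZeroMemClass.coe_zero]
    rw [h2]
    simp
  have hτH : ∀ h : H, τ (h : L) = -(h : L) := fun h => hτ0 _ (hH0 h)
  have τwt : ∀ (α : H →ₗ[K] K) (x : L), x ∈ wtSpace H α → τ x ∈ wtSpace H (-α) := by
    intro α x hx h
    have h1 : ⁅(h : L), τ x⁆ = τ ⁅τ (h : L), x⁆ := by
      conv_lhs => rw [← hinv (h : L)]
      rw [LieEquiv.map_lie]
    rw [h1, hτH h, neg_lie, hx h]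
    show τ.toLieHom.toLinearMap _ = _
    rw [map_neg, map_smul]
    simp only [LinearMap.neg_apply, neg_smul]
    rfl
  have key : g.toSubmodule ≤ Submodule.comap τ.toLieHom.toLinearMap g.toSubmodule := by
    refine le_trans hspan.le (sup_le ?_ (iSup_le fun α => iSup_le fun hα => ?_))
    · intro x hx
      simp only [Submodule.mem_comap]
      show τ x ∈ g.toSubmodule
      have hh : τ ((⟨x, hx⟩ : H) : L) = -x := hτH ⟨x, hx⟩
      rw [show τ x = -x from hh]
      exact neg_mem (hHg hx)
    · rintro x ⟨hxg, hxα⟩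
      simp only [Submodule.mem_comap]
      show τ x ∈ g.toSubmodule
      by_cases hx0 : x = 0
      · rw [hx0]
        show τ.toLieHom.toLinearMap 0 ∈ g.toSubmodule
        rw [map_zero]; exact Submodule.zero_mem _
      obtain ⟨y, hyg, hyα, hy0⟩ := hpair α hα ⟨x, hxg, hxα, hx0⟩
      have hτxN : τ x ∈ N 0 := by
        have h0 := hτN 0
        rw [neg_zero] at h0
        have h1 : τ x ∈ (↑(N 0) : Set L) := by
          rw [← h0]; exact Set.mem_image_of_mem τ (hg0 hxg)
        exact h1
      have hτxw : τ x ∈ wtSpace H (-α) := τwt α x hxα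
      have hαn : (-α : H →ₗ[K] K) ≠ 0 := fun h => hα (neg_eq_zero.mp h)
      letI : Module.Free K ↥(N 0 ⊓ wtSpace H (-α)) := Module.Free.of_divisionRing K _
      obtain ⟨v, hv⟩ := (rank_submodule_le_one_iff' _).mp (hdim (-α) hαn)
      obtain ⟨r, hr⟩ := Submodule.mem_span_singleton.mp (hv ⟨hτxN, hτxw⟩)
      obtain ⟨s, hs⟩ := Submodule.mem_span_singleton.mp (hv ⟨hg0 hyg, hyα⟩)
      have hs0 : s ≠ 0 := by
        intro h
        apply hy0
        rw [← hs, h, zero_smul]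
      have hxy : τ x = (r * s⁻¹) • y := by
        rw [← hr, ← hs, smul_smul, mul_assoc, inv_mul_cancel₀ hs0, mul_one]
      rw [hxy]
      exact Submodule.smul_mem _ _ hyg
  intro x hx
  exact key hx
end
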